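/- Let A be the MIR random attribution matrix for a partition B of {1,...,n}, with E[A] = S the bag-averaging matrix. Then for any fixed θ* and X, E[‖(A − I)Xθ*‖²] = 2‖ỹ‖² − 2 ∑_{l=1}^m (∑_{i∈B_l} ỹ_i)²/|B_l|, where ỹ = Xθ*. -/

import Mathlib

open Finset Matrix MeasureTheory

/-- The distribution of the representatives `J : Fin m → Fin n`: independently for each bag
`B_l = {i : bag i = l}`, `J l` is uniform on `B_l`. -/
noncomputable def attribMeasure (n m : ℕ) (bag : Fin n → Fin m)
    (hsurj : Function.Surjective bag) : Measure (Fin m → Fin n) :=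
  Measure.pi fun l => (PMF.uniformOfFinset (univ.filter fun i => bag i = l)
    (by obtain ⟨i, hi⟩ := hsurj l; exact ⟨i, by simp [hi]⟩)).toMeasure

/-!
Row `i` of `A - I` applied to `ỹ` is `ỹ (J (bag i)) - ỹ i`, which depends on `J` only through
the coordinate `J (bag i)`, uniform on the bag of `i`. By linearity of expectation the left side is
`∑ᵢ |B_{bag i}|⁻¹ ∑_{j ∈ B_{bag i}} (ỹ j - ỹ i)²`, and inside one bag `B` the identity
`∑_{i,j ∈ B} (ỹ j - ỹ i)² = 2 |B| ∑_{i ∈ B} ỹ i² - 2 (∑_{i ∈ B} ỹ i)²` finishes the computation.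
-/

theorem Matrix.of_ite_eq_mulVec {m n R : Type*} [Fintype n] [DecidableEq n] [NonAssocSemiring R]
    (f : m → n) (y : n → R) :
    (Matrix.of fun i j => if j = f i then (1 : R) else 0) *ᵥ y = y ∘ f := by
  ext i
  simp [mulVec, dotProduct]

theorem PMF.integral_uniformOfFinset {α E : Type*} [Fintype α] [MeasurableSpace α]
    [MeasurableSingletonClass α] [NormedAddCommGroup E] [NormedSpace ℝ E]
    [CompleteSpace E] (s : Finset α) (hs : s.Nonempty) (f : α → E) :
    ∫ a, f a ∂(uniformOfFinset s hs).toMeasure = (#s : ℝ)⁻¹ • ∑ a ∈ s, f a := by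
  rw [integral_eq_sum, smul_sum, ← sum_subset s.subset_univ fun a _ ha => by
    simp [uniformOfFinset_apply_of_notMem hs ha]]
  refine sum_congr rfl fun a ha => ?_
  simp [uniformOfFinset_apply_of_mem hs ha]

theorem Finset.sum_sum_sub_sq {ι R : Type*} [CommRing R] (s : Finset ι) (f : ι → R) :
    ∑ i ∈ s, ∑ j ∈ s, (f j - f i) ^ 2 = 2 * #s * ∑ i ∈ s, f i ^ 2 - 2 * (∑ i ∈ s, f i) ^ 2 := by
  simp only [sub_sq, sum_add_distrib, sum_sub_distrib, sum_const, ← mul_sum, ← sum_mul,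
    nsmul_eq_mul]
  ring

instance (n m : ℕ) (bag : Fin n → Fin m) (hsurj : Function.Surjective bag) :
    IsProbabilityMeasure (attribMeasure n m bag hsurj) := by
  unfold attribMeasure; infer_instance

theorem integral_attribMeasure_comp_eval {n m : ℕ} {bag : Fin n → Fin m}
    (hsurj : Function.Surjective bag) (l : Fin m) (g : Fin n → ℝ) :
    ∫ J, g (J l) ∂attribMeasure n m bag hsurj
      = (#{i | bag i = l} : ℝ)⁻¹ * ∑ i with bag i = l, g i := by
  rw [attribMeasure, integral_comp_eval .of_discrete, PMF.integral_uniformOfFinset, smul_eq_mul]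

theorem sum_inv_card_fiber_mul_sum_sub_sq {ι κ : Type*} [Fintype ι] [Fintype κ] [DecidableEq κ]
    (bag : ι → κ) (y : ι → ℝ) :
    ∑ i, (#{j | bag j = bag i} : ℝ)⁻¹ * ∑ j with bag j = bag i, (y j - y i) ^ 2
      = 2 * ∑ i, y i ^ 2 - 2 * ∑ l, (∑ i with bag i = l, y i) ^ 2 / #{i | bag i = l} := by
  rw [← sum_fiberwise univ bag (fun i => y i ^ 2), mul_sum, ← sum_fiberwise univ bag, mul_sum,
    ← sum_sub_distrib]
  refine sum_congr rfl fun l _ => ?_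
  rw [sum_congr rfl fun i hi => by rw [(mem_filter.1 hi).2], ← mul_sum, sum_sum_sub_sq]
  rcases (#{i | bag i = l}).eq_zero_or_pos with hempty | _
  · -- an empty fibre contributes `0⁻¹ * 0 = 0` on the left and `0 - 0 / 0 = 0` on the right
    simp [card_eq_zero.1 hempty]
  · field_simp

/-- with `ỹ = Xθ*`,
`E[‖(A − I)Xθ*‖²] = 2‖ỹ‖² − 2 ∑_l (∑_{i∈B_l} ỹ_i)²/|B_l|`. -/
theorem expected_A_minus_I (n m d : ℕ) (bag : Fin n → Fin m)
    (hsurj : Function.Surjective bag)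
    (X : Matrix (Fin n) (Fin d) ℝ) (θstar : Fin d → ℝ)
    (ytil : Fin n → ℝ) (hy : ytil = X.mulVec θstar) :
    ∫ J, ∑ i : Fin n,
        ((((Matrix.of fun i j : Fin n => if j = J (bag i) then (1 : ℝ) else 0)
            - (1 : Matrix (Fin n) (Fin n) ℝ)).mulVec (X.mulVec θstar)) i) ^ 2
      ∂(attribMeasure n m bag hsurj)
      = 2 * ∑ i : Fin n, (ytil i) ^ 2
        - 2 * ∑ l : Fin m, (∑ i ∈ univ.filter (fun i => bag i = l), ytil i) ^ 2 /
            ((univ.filter fun i => bag i = l).card : ℝ) := by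
  subst hy
  simp only [sub_mulVec, one_mulVec, of_ite_eq_mulVec, Pi.sub_apply, Function.comp_apply]
  rw [integral_finsetSum _ fun i _ => .of_finite, ← sum_inv_card_fiber_mul_sum_sub_sq bag (X *ᵥ θstar)]
  exact sum_congr rfl fun i _ =>
    integral_attribMeasure_comp_eval hsurj (bag i) fun j => ((X *ᵥ θstar) j - (X *ᵥ θstar) i) ^ 2
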